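/- Fix b ∈ ℝ and ω > 0. For every y ∈ ℝ² with y ≠ 0 and every η ∈ ℝ², the trajectory reaches the origin at some time if and only if the initial angular momentum vanishes: there exists t ∈ ℝ with x^t(y,η) = 0 if and only if y ∧ η = b, where u ∧ v := u₁v₂ − u₂v₁. -/

import Mathlib

/-!
The key identity is `y ∧ x^t = (sin ωt / ω) (y ∧ η − b)`: the term `cos(ωt) y` is parallel to
`y`, and `y ∧ A(y) = b`. So if `y ∧ η ≠ b` the trajectory can meet the origin only when
`sin ωt = 0`, where it equals `±y ≠ 0`. If `y ∧ η = b`, then `η − A(y) = k y` for some `k`, the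
trajectory stays on the line `ℝ y`, and its coefficient `cos ωt + (k/ω) sin ωt` vanishes at
`ωt = arctan(k/ω) + π/2`.
-/

/-- The Aharonov–Bohm vector potential with flux `b`:
`A(x) = (−b x₂/|x|², b x₁/|x|²)` for `x ∈ ℝ² \ {0}`. -/
noncomputable def A (b : ℝ) (x : ℝ × ℝ) : ℝ × ℝ :=
  (-b * x.2 / (x.1 ^ 2 + x.2 ^ 2), b * x.1 / (x.1 ^ 2 + x.2 ^ 2))

/-- The wedge product `u ∧ v = u₁v₂ − u₂v₁` on `ℝ²`. -/
def wedge (u v : ℝ × ℝ) : ℝ := u.1 * v.2 - u.2 * v.1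

/-- The Euclidean inner product on `ℝ²`. -/
def dot (u v : ℝ × ℝ) : ℝ := u.1 * v.1 + u.2 * v.2

/-- The squared Euclidean norm on `ℝ²`. -/
def normSq2 (u : ℝ × ℝ) : ℝ := u.1 ^ 2 + u.2 ^ 2

/-- The classical trajectory `x^t(y,η) = cos(ωt)·y + (sin(ωt)/ω)·(η − A(y))`. -/
noncomputable def traj (b ω : ℝ) (y η : ℝ × ℝ) (t : ℝ) : ℝ × ℝ :=
  Real.cos (ω * t) • y + (Real.sin (ω * t) / ω) • (η - A b y)

open Real

theorem normSq2_ne_zero {u : ℝ × ℝ} (hu : u ≠ 0) : normSq2 u ≠ 0 := by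
  contrapose! hu
  unfold normSq2 at hu
  have h1 : u.1 ^ 2 = 0 := by nlinarith [sq_nonneg u.1, sq_nonneg u.2]
  have h2 : u.2 ^ 2 = 0 := by nlinarith [sq_nonneg u.1, sq_nonneg u.2]
  exact Prod.ext (pow_eq_zero_iff two_ne_zero |>.mp h1) (pow_eq_zero_iff two_ne_zero |>.mp h2)

theorem wedge_smul_add_smul_right (u v w : ℝ × ℝ) (a c : ℝ) :
    wedge u (a • v + c • w) = a * wedge u v + c * wedge u w := by
  simp only [wedge, Prod.fst_add, Prod.snd_add, Prod.smul_fst, Prod.smul_snd, smul_eq_mul]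
  ring

theorem wedge_self (u : ℝ × ℝ) : wedge u u = 0 := by
  unfold wedge; ring

theorem wedge_sub_right (u v w : ℝ × ℝ) : wedge u (v - w) = wedge u v - wedge u w := by
  simp only [wedge, Prod.fst_sub, Prod.snd_sub]
  ring

theorem wedge_A {y : ℝ × ℝ} (hy : y ≠ 0) (b : ℝ) : wedge y (A b y) = b := by
  have h := normSq2_ne_zero hy
  unfold normSq2 at h
  simp only [wedge, A]
  field_simp
  ring

theorem exists_eq_smul_of_wedge_eq_zero {u v : ℝ × ℝ} (hu : u ≠ 0) (h : wedge u v = 0) :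
    ∃ k : ℝ, v = k • u := by
  have hn := normSq2_ne_zero hu
  refine ⟨dot u v / normSq2 u, ?_⟩
  simp only [wedge] at h
  simp only [dot, normSq2] at hn ⊢
  ext <;> simp only [Prod.smul_fst, Prod.smul_snd, smul_eq_mul] <;> field_simp
  · linear_combination -u.2 * h
  · linear_combination u.1 * h

theorem exists_cos_add_mul_sin_eq_zero (a : ℝ) : ∃ θ : ℝ, cos θ + a * sin θ = 0 :=
  ⟨arctan a + π / 2, by
    rw [cos_add_pi_div_two, sin_add_pi_div_two, sin_arctan, cos_arctan]
    ring⟩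

theorem wedge_traj (b ω : ℝ) (y η : ℝ × ℝ) (hy : y ≠ 0) (t : ℝ) :
    wedge y (traj b ω y η t) = sin (ω * t) / ω * (wedge y η - b) := by
  rw [traj, wedge_smul_add_smul_right, wedge_self, wedge_sub_right, wedge_A hy]
  ring

theorem traj_ne_zero_of_sin_eq_zero (b ω : ℝ) {y : ℝ × ℝ} (hy : y ≠ 0) (η : ℝ × ℝ) {t : ℝ}
    (hs : sin (ω * t) = 0) : traj b ω y η t ≠ 0 := by
  have hc : cos (ω * t) ≠ 0 := by
    rcases sin_eq_zero_iff_cos_eq.mp hs with h | h <;> norm_num [h]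
  simpa [traj, hs, hc] using hy

/-- The trajectory reaches the origin at some time if and only if the initial
angular momentum vanishes: `∃ t, x^t(y,η) = 0 ↔ y ∧ η = b`. -/
theorem traj_hits_origin_iff (b ω : ℝ) (hω : 0 < ω)
    (y : ℝ × ℝ) (hy : y ≠ 0) (η : ℝ × ℝ) :
    (∃ t : ℝ, traj b ω y η t = 0) ↔ wedge y η = b := by
  constructor
  · rintro ⟨t, ht⟩
    have hs : sin (ω * t) / ω ≠ 0 :=
      div_ne_zero (fun hs => traj_ne_zero_of_sin_eq_zero b ω hy η hs ht) hω.ne'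
    have h : sin (ω * t) / ω * (wedge y η - b) = 0 := by
      rw [← wedge_traj b ω y η hy t, ht]
      simp [wedge]
    exact sub_eq_zero.mp ((mul_eq_zero.mp h).resolve_left hs)
  · intro hw
    obtain ⟨k, hk⟩ := exists_eq_smul_of_wedge_eq_zero hy
      (by rw [wedge_sub_right, wedge_A hy, hw, sub_self] : wedge y (η - A b y) = 0)
    obtain ⟨θ, hθ⟩ := exists_cos_add_mul_sin_eq_zero (k / ω)
    refine ⟨θ / ω, ?_⟩
    rw [traj, hk, smul_smul, ← add_smul, mul_div_cancel₀ θ hω.ne']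
    convert zero_smul ℝ y
    linear_combination hθ
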